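/- arXiv:quant-ph/0408125 — 2 statements merged into one kernel-verified Lean document; each statement's English description precedes it below -/
import Mathlib

section
/- Let ρ be a density matrix on ℂ^s ⊗ ℂ^f ⊗ ℂ^g. Let (B_i)_{i∈I} and (C_j)_{j∈J} be projective measurements on ℂ^s with B_i C_j = C_j B_i for all i, j, and let (Y_i)_{i∈I} and (Z_j)_{j∈J} be projective measurements on ℂ^f with Y_i Z_j = Z_j Y_i for all i, j, such that Re Tr((B_i ⊗ Y_{i'} ⊗ 1) ρ) = 0 whenever i ≠ i' and Re Tr((C_j ⊗ Z_{j'} ⊗ 1) ρ) = 0 whenever j ≠ j'. Then: (a) the family A_{ij} := B_i C_j, (i,j) ∈ I×J, is a projective measurement on ℂ^s; (b) the family X_{ij} := Y_i Z_j is a projective measurement on ℂ^f; (c) Re Tr((A_{i'j'} ⊗ X_{ij} ⊗ 1) ρ) = 0 whenever (i',j') ≠ (i,j), so the refined observable A is perfectly recorded in the fragment ℂ^f; and (d) B_i = ∑_j A_{ij} and C_j = ∑_i A_{ij}, so B and C are coarse-grainings of A (hence H(B|A) = 0 and H(C|A) = 0). -/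
open Matrix Kronecker BigOperators ComplexOrder

noncomputable section

/-- A density matrix: positive semidefinite with trace 1. -/
def IsDensityMatrix {n : Type*} [Fintype n] (ρ : Matrix n n ℂ) : Prop :=
  ρ.PosSemidef ∧ ρ.trace = 1

/-- A projective measurement: a finite family of Hermitian, mutually orthogonal
idempotents summing to the identity. -/
def IsProjMeasurement {ι n : Type*} [Fintype ι] [DecidableEq ι] [Fintype n] [DecidableEq n]
    (P : ι → Matrix n n ℂ) : Prop :=
  (∀ k, (P k).IsHermitian) ∧
  (∀ k l, P k * P l = if k = l then P k else 0) ∧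
  (∑ k, P k = 1)

/-- conjTranspose of a Kronecker product. -/
lemma kron_conjT {m n : Type*} (A : Matrix m m ℂ) (B : Matrix n n ℂ) :
    (A ⊗ₖ B)ᴴ = Aᴴ ⊗ₖ Bᴴ := by
  ext ⟨i, j⟩ ⟨k, l⟩
  simp [conjTranspose_apply, kroneckerMap_apply, mul_comm]

/-- Kronecker product of PSD matrices is PSD. -/
lemma psd_kron {m n : Type*} [Fintype m] [DecidableEq m] [Fintype n] [DecidableEq n]
    {A : Matrix m m ℂ} {B : Matrix n n ℂ} (hA : A.PosSemidef) (hB : B.PosSemidef) :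
    (A ⊗ₖ B).PosSemidef := by
  exact hA.kronecker hB

/-- A Hermitian idempotent is PSD. -/
lemma psd_of_proj {n : Type*} [Fintype n] {P : Matrix n n ℂ}
    (h1 : P.IsHermitian) (h2 : P * P = P) : P.PosSemidef := by
  have : P = Pᴴ * P := by rw [h1.eq, h2]
  rw [this]; exact Matrix.posSemidef_conjTranspose_mul_self _

/-- Trace of product of PSD matrices is nonnegative. -/
lemma trace_psd_mul_nonneg {n : Type*} [Fintype n] [DecidableEq n]
    {M N : Matrix n n ℂ} (hM : M.PosSemidef) (hN : N.PosSemidef) :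
    0 ≤ (M * N).trace := by
  classical
  open scoped MatrixOrder in
  obtain ⟨a, rfl⟩ := CStarAlgebra.nonneg_iff_eq_star_mul_self.mp hM.nonneg
  rw [star_eq_conjTranspose, Matrix.mul_assoc, Matrix.trace_mul_comm]
  exact (hN.mul_mul_conjTranspose_same a).trace_nonneg

/-- Theorem 1 (per-fragment content): two commuting observables `B`, `C`, each perfectly
recorded in the same fragment, merge into a maximally refined projective measurement
`A_{ij} = Bᵢ Cⱼ`, perfectly recorded in the fragment by `X_{ij} = Yᵢ Zⱼ`, of which `B`
and `C` are coarse-grainings. -/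
theorem stmt_6 {s fdim gdim : ℕ} {I J : Type*}
    [Fintype I] [DecidableEq I] [Fintype J] [DecidableEq J]
    (ρ : Matrix ((Fin s × Fin fdim) × Fin gdim) ((Fin s × Fin fdim) × Fin gdim) ℂ)
    (hρ : IsDensityMatrix ρ)
    (B : I → Matrix (Fin s) (Fin s) ℂ) (hB : IsProjMeasurement B)
    (C : J → Matrix (Fin s) (Fin s) ℂ) (hC : IsProjMeasurement C)
    (hBC : ∀ i j, B i * C j = C j * B i)
    (Y : I → Matrix (Fin fdim) (Fin fdim) ℂ) (hY : IsProjMeasurement Y)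
    (Z : J → Matrix (Fin fdim) (Fin fdim) ℂ) (hZ : IsProjMeasurement Z)
    (hYZ : ∀ i j, Y i * Z j = Z j * Y i)
    (hBY : ∀ i i', i ≠ i' →
      ((((B i ⊗ₖ Y i') ⊗ₖ (1 : Matrix (Fin gdim) (Fin gdim) ℂ)) * ρ).trace).re = 0)
    (hCZ : ∀ j j', j ≠ j' →
      ((((C j ⊗ₖ Z j') ⊗ₖ (1 : Matrix (Fin gdim) (Fin gdim) ℂ)) * ρ).trace).re = 0) :
    IsProjMeasurement (fun ij : I × J => B ij.1 * C ij.2) ∧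
    IsProjMeasurement (fun ij : I × J => Y ij.1 * Z ij.2) ∧
    (∀ (i' : I) (j' : J) (i : I) (j : J), (i', j') ≠ (i, j) →
      (((((B i' * C j') ⊗ₖ (Y i * Z j)) ⊗ₖ (1 : Matrix (Fin gdim) (Fin gdim) ℂ)) * ρ).trace).re
        = 0) ∧
    (∀ i, B i = ∑ j, B i * C j) ∧
    (∀ j, C j = ∑ i, B i * C j) := by
  obtain ⟨hBh, hBo, hBs⟩ := hB
  obtain ⟨hCh, hCo, hCs⟩ := hC
  obtain ⟨hYh, hYo, hYs⟩ := hY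
  obtain ⟨hZh, hZo, hZs⟩ := hZ
  have key : ∀ {n : ℕ} (P : I → Matrix (Fin n) (Fin n) ℂ) (Q : J → Matrix (Fin n) (Fin n) ℂ),
      (∀ k, (P k).IsHermitian) → (∀ k l, P k * P l = if k = l then P k else 0) →
      (∑ k, P k = 1) →
      (∀ k, (Q k).IsHermitian) → (∀ k l, Q k * Q l = if k = l then Q k else 0) →
      (∑ k, Q k = 1) → (∀ i j, P i * Q j = Q j * P i) →
      IsProjMeasurement (fun ij : I × J => P ij.1 * Q ij.2) := by
    intro n P Q hPh hPo hPs hQh hQo hQs hPQ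
    refine ⟨fun ⟨i, j⟩ => ?_, fun ⟨i, j⟩ ⟨k, l⟩ => ?_, ?_⟩
    · show (P i * Q j)ᴴ = P i * Q j
      rw [Matrix.conjTranspose_mul, (hPh i).eq, (hQh j).eq]
      exact (hPQ i j).symm
    · show P i * Q j * (P k * Q l) = _
      have h : P i * Q j * (P k * Q l) = (P i * P k) * (Q j * Q l) := by
        rw [Matrix.mul_assoc, ← Matrix.mul_assoc (Q j), ← hPQ, Matrix.mul_assoc,
          ← Matrix.mul_assoc, ← Matrix.mul_assoc]
      rw [h, hPo, hQo]
      by_cases hik : i = k <;> by_cases hjl : j = l <;>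
        simp [hik, hjl, Prod.ext_iff]
    · show ∑ k : I × J, P k.1 * Q k.2 = 1
      rw [Fintype.sum_prod_type]
      simp_rw [← Finset.mul_sum, ← Finset.sum_mul, hQs, mul_one, hPs]
  have keyBC := key B C hBh hBo hBs hCh hCo hCs hBC
  have keyYZ := key Y Z hYh hYo hYs hZh hZo hZs hYZ
  refine ⟨keyBC, keyYZ, ?_, ?_, ?_⟩
  · intro i' j' i j hne
    have hρpsd := hρ.1
    set A := B i' * C j' with hA
    set X := Y i * Z j with hX
    have hAproj : A * A = A := by
      have := keyBC.2.1 (i', j') (i', j'); simpa using this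
    have hAherm : A.IsHermitian := keyBC.1 (i', j')
    have hXproj : X * X = X := by
      have := keyYZ.2.1 (i, j) (i, j); simpa using this
    have hXherm : X.IsHermitian := keyYZ.1 (i, j)
    have hsmallpsd : ((A ⊗ₖ X) ⊗ₖ (1 : Matrix (Fin gdim) (Fin gdim) ℂ)).PosSemidef :=
      psd_kron (psd_kron (psd_of_proj hAherm hAproj) (psd_of_proj hXherm hXproj))
        Matrix.PosSemidef.one
    have hsmall_nonneg : 0 ≤ (((A ⊗ₖ X) ⊗ₖ (1 : Matrix (Fin gdim) (Fin gdim) ℂ)) * ρ).trace :=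
      trace_psd_mul_nonneg hsmallpsd hρpsd
    have main : ∀ (P : Matrix (Fin s) (Fin s) ℂ) (W : Matrix (Fin fdim) (Fin fdim) ℂ),
        P.IsHermitian → P * P = P → W.IsHermitian → W * W = W →
        P * A = A → A * P = A → W * X = X → X * W = X →
        ((((P ⊗ₖ W) ⊗ₖ (1 : Matrix (Fin gdim) (Fin gdim) ℂ)) * ρ).trace).re = 0 →
        ((((A ⊗ₖ X) ⊗ₖ (1 : Matrix (Fin gdim) (Fin gdim) ℂ)) * ρ).trace).re = 0 := by
      intro P W hPh hPp hWh hWp hPA hAP hWX hXW hzero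
      set D := P ⊗ₖ W - A ⊗ₖ X with hD
      have h1 : (P ⊗ₖ W) * (P ⊗ₖ W) = P ⊗ₖ W := by
        rw [← Matrix.mul_kronecker_mul, hPp, hWp]
      have h2 : (P ⊗ₖ W) * (A ⊗ₖ X) = A ⊗ₖ X := by
        rw [← Matrix.mul_kronecker_mul, hPA, hWX]
      have h3 : (A ⊗ₖ X) * (P ⊗ₖ W) = A ⊗ₖ X := by
        rw [← Matrix.mul_kronecker_mul, hAP, hXW]
      have h4 : (A ⊗ₖ X) * (A ⊗ₖ X) = A ⊗ₖ X := by
        rw [← Matrix.mul_kronecker_mul, hAproj, hXproj]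
      have hDproj : D * D = D := by
        rw [hD, Matrix.sub_mul, Matrix.mul_sub, Matrix.mul_sub, h1, h2, h3, h4]
        abel
      have hDherm : D.IsHermitian := by
        show Dᴴ = D
        rw [hD, Matrix.conjTranspose_sub, kron_conjT, kron_conjT, hPh.eq, hWh.eq,
          hAherm.eq, hXherm.eq]
      have hDpsd : (D ⊗ₖ (1 : Matrix (Fin gdim) (Fin gdim) ℂ)).PosSemidef :=
        psd_kron (psd_of_proj hDherm hDproj) Matrix.PosSemidef.one
      have hD_nonneg : 0 ≤ ((D ⊗ₖ (1 : Matrix (Fin gdim) (Fin gdim) ℂ)) * ρ).trace :=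
        trace_psd_mul_nonneg hDpsd hρpsd
      have hsum : A ⊗ₖ X + D = P ⊗ₖ W := by rw [hD]; abel
      have htr : ((((P ⊗ₖ W) ⊗ₖ (1 : Matrix (Fin gdim) (Fin gdim) ℂ)) * ρ).trace)
          = (((A ⊗ₖ X) ⊗ₖ (1 : Matrix (Fin gdim) (Fin gdim) ℂ)) * ρ).trace
            + ((D ⊗ₖ (1 : Matrix (Fin gdim) (Fin gdim) ℂ)) * ρ).trace := by
        rw [← hsum, Matrix.add_kronecker, Matrix.add_mul, Matrix.trace_add]
      have hre1 : 0 ≤ ((((A ⊗ₖ X) ⊗ₖ (1 : Matrix (Fin gdim) (Fin gdim) ℂ)) * ρ).trace).re :=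
        (Complex.le_def.mp hsmall_nonneg).1
      have hre2 : 0 ≤ (((D ⊗ₖ (1 : Matrix (Fin gdim) (Fin gdim) ℂ)) * ρ).trace).re :=
        (Complex.le_def.mp hD_nonneg).1
      have := congrArg Complex.re htr
      rw [Complex.add_re, hzero] at this
      linarith
    by_cases hii : i' = i
    · have hjj : j' ≠ j := by rintro rfl; exact hne (by rw [hii])
      have hCC : C j' * C j' = C j' := by simpa using hCo j' j'
      have hZZ : Z j * Z j = Z j := by simpa using hZo j j
      refine main (C j') (Z j) (hCh j') hCC (hZh j) hZZ ?_ ?_ ?_ ?_ (hCZ j' j hjj)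
      · rw [hA, ← Matrix.mul_assoc, ← hBC, Matrix.mul_assoc, hCC]
      · rw [hA, Matrix.mul_assoc, hCC]
      · rw [hX, ← Matrix.mul_assoc, ← hYZ, Matrix.mul_assoc, hZZ]
      · rw [hX, Matrix.mul_assoc, hZZ]
    · have hBB : B i' * B i' = B i' := by simpa using hBo i' i'
      have hYY : Y i * Y i = Y i := by simpa using hYo i i
      refine main (B i') (Y i) (hBh i') hBB (hYh i) hYY ?_ ?_ ?_ ?_ (hBY i' i hii)
      · rw [hA, ← Matrix.mul_assoc, hBB]
      · rw [hA, Matrix.mul_assoc, ← hBC, ← Matrix.mul_assoc, hBB]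
      · rw [hX, ← Matrix.mul_assoc, hYY]
      · rw [hX, Matrix.mul_assoc, ← hYZ, ← Matrix.mul_assoc, hYY]
  · intro i
    rw [← Finset.mul_sum, hCs, mul_one]
  · intro j
    rw [← Finset.sum_mul, hBs, one_mul]
end
end

section
/- Let p be a probability vector on {1,…,d}, let Ψ_1,…,Ψ_d be orthonormal vectors in ℂ^m, and let σ = ∑_{i=1}^d p_i · E_ii ⊗ |Ψ_i⟩⟨Ψ_i| be the corresponding density matrix on ℂ^d ⊗ ℂ^m. Let (B_l)_{l∈L} be any projective measurement on ℂ^d. Define the system-side joint distribution p_{BA}(l,i) = p_i · Re((B_l)_{ii}) (the joint distribution of measuring the pointer observable A, with projectors E_ii, followed by B). Then: (a) for every projective measurement (Y_n) on ℂ^m, with p_{BY}(l,n) = Re Tr((B_l ⊗ Y_n) σ), one has I(B:Y) ≤ I(B:A); and (b) the pointer measurement achieves this bound: with p_{BX}(l,i) = Re Tr((B_l ⊗ |Ψ_i⟩⟨Ψ_i|) σ), one has p_{BX} = p_{BA}, hence I(B:X) = I(B:A). Consequently the maximal information about B extractable from the fragment equals I(B:A). -/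
open Matrix Kronecker BigOperators

noncomputable section

/-- Standard Hermitian inner product on `Fin m → ℂ` (conjugate-linear in the first slot). -/
def cinner {m : ℕ} (u v : Fin m → ℂ) : ℂ :=
  ∑ k, (starRingEnd ℂ) (u k) * v k

/-- The matrix unit `E_ii`. -/
def matE {d : ℕ} (i : Fin d) : Matrix (Fin d) (Fin d) ℂ :=
  Matrix.single i i 1

/-- The rank-one projector `|v⟩⟨v|`. -/
def projVec {m : ℕ} (v : Fin m → ℂ) : Matrix (Fin m) (Fin m) ℂ :=
  Matrix.of fun k l => v k * (starRingEnd ℂ) (v l)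

/-- The perfectly correlated system–fragment state `σ = ∑ᵢ pᵢ E_ii ⊗ |Ψᵢ⟩⟨Ψᵢ|`. -/
def sigmaSF {d m : ℕ} (p : Fin d → ℝ) (Ψ : Fin d → Fin m → ℂ) :
    Matrix (Fin d × Fin m) (Fin d × Fin m) ℂ :=
  ∑ i, (p i : ℂ) • (matE i ⊗ₖ projVec (Ψ i))

/-- Mutual information of a joint pmf `p` on `I × J`. -/
def mutualInfo {I J : Type*} [Fintype I] [Fintype J] (p : I → J → ℝ) : ℝ :=
  ∑ i, ∑ j, if p i j = 0 then 0
    else p i j * Real.log (p i j / ((∑ j', p i j') * (∑ i', p i' j)))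


/-!
Since `σ` is diagonal in the pointer basis, a fragment measurement `Y` only sees the pointer
record through the classical channel `q i n = Re ⟨Ψᵢ, Yₙ Ψᵢ⟩`:
`p_{BY} l n = ∑ i, p_{BA} l i * q i n`. The channel is stochastic (`Yₙ` is a positive projector and
`∑ₙ Yₙ = 1`, `‖Ψᵢ‖ = 1`), so (a) is the data-processing inequality for mutual information, which
follows from the log-sum inequality. For `Y = X` the channel is the identity by orthonormality.
-/

lemma Real.mul_log_add_sub_le_mul_log_div {a b c : ℝ} (ha : 0 ≤ a) (hb : 0 ≤ b)
    (hab : b = 0 → a = 0) (hc : 0 < c) : a * log c + (a - b * c) ≤ a * log (a / b) := by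
  rcases ha.eq_or_lt with rfl | ha
  · simpa using mul_nonneg hb hc.le
  have hb : 0 < b := hb.lt_of_ne fun h => ha.ne' (hab h.symm)
  have hgibbs := one_sub_inv_le_log_of_pos (div_pos ha (mul_pos hb hc))
  rw [inv_div, log_div ha.ne' (mul_pos hb hc).ne', log_mul hb.ne' hc.ne'] at hgibbs
  rw [log_div ha.ne' hb.ne']
  have := mul_le_mul_of_nonneg_left hgibbs ha.le
  rw [mul_sub, mul_one, mul_div_cancel₀ _ ha.ne'] at this
  linarith

theorem Real.sum_mul_log_div_sum_le {ι : Type*} [Fintype ι] (a b : ι → ℝ) (ha : ∀ i, 0 ≤ a i)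
    (hb : ∀ i, 0 ≤ b i) (hab : ∀ i, b i = 0 → a i = 0) :
    (∑ i, a i) * log ((∑ i, a i) / ∑ i, b i) ≤ ∑ i, a i * log (a i / b i) := by
  set A := ∑ i, a i
  set B := ∑ i, b i
  rcases (Finset.sum_nonneg fun i _ => ha i : 0 ≤ A).eq_or_lt with hA | hA
  · have ha0 : ∀ i, a i = 0 := fun i =>
      (Finset.sum_eq_zero_iff_of_nonneg fun i _ => ha i).mp hA.symm i (Finset.mem_univ i)
    simp [A, ha0]
  have hB : 0 < B := by
    refine (Finset.sum_nonneg fun i _ => hb i).lt_of_ne fun hB => hA.ne' ?_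
    refine Finset.sum_eq_zero fun i _ => hab i ?_
    exact (Finset.sum_eq_zero_iff_of_nonneg fun i _ => hb i).mp hB.symm i (Finset.mem_univ i)
  calc A * log (A / B) = ∑ i, (a i * log (A / B) + (a i - b i * (A / B))) := by
        rw [Finset.sum_add_distrib, Finset.sum_sub_distrib, ← Finset.sum_mul, ← Finset.sum_mul,
          mul_div_cancel₀ _ hB.ne', sub_self, add_zero]
    _ ≤ ∑ i, a i * log (a i / b i) := Finset.sum_le_sum fun i _ =>
        mul_log_add_sub_le_mul_log_div (ha i) (hb i) (hab i) (div_pos hA hB)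

lemma mutualInfo_eq_sum {I J : Type*} [Fintype I] [Fintype J] (p : I → J → ℝ) :
    mutualInfo p = ∑ i, ∑ j, p i j * Real.log (p i j / ((∑ j', p i j') * ∑ i', p i' j)) := by
  refine Finset.sum_congr rfl fun i _ => Finset.sum_congr rfl fun j _ => ?_
  split_ifs with h <;> simp [h]

lemma mutualInfo_sum_mul_le {L I N : Type*} [Fintype L] [Fintype I] [Fintype N]
    (s : L → I → ℝ) (q : I → N → ℝ) (hs : ∀ l i, 0 ≤ s l i) (hq : ∀ i n, 0 ≤ q i n)
    (hq1 : ∀ i, ∑ n, q i n = 1) :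
    mutualInfo (fun l n => ∑ i, s l i * q i n) ≤ mutualInfo s := by
  set f : L → I → ℝ := fun l i =>
    s l i * Real.log (s l i / ((∑ i', s l i') * ∑ l', s l' i))
  have hrow : ∀ l, ∑ n, ∑ i, s l i * q i n = ∑ i, s l i := fun l => by
    rw [Finset.sum_comm]
    simp only [← Finset.mul_sum, hq1, mul_one]
  have hcol : ∀ n, ∑ l, ∑ i, s l i * q i n = ∑ i, (∑ l, s l i) * q i n := fun n => by
    rw [Finset.sum_comm]
    simp only [Finset.sum_mul]
  have hmarg_nonneg : ∀ l i, 0 ≤ (∑ i', s l i') * ∑ l', s l' i := fun l i =>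
    mul_nonneg (Finset.sum_nonneg fun i' _ => hs l i') (Finset.sum_nonneg fun l' _ => hs l' i)
  have hmarg_eq_zero : ∀ l i, (∑ i', s l i') * (∑ l', s l' i) = 0 → s l i = 0 := by
    intro l i h
    refine le_antisymm ?_ (hs l i)
    rcases mul_eq_zero.mp h with h | h
    · exact h ▸ Finset.single_le_sum (fun i' _ => hs l i') (Finset.mem_univ i)
    · exact h ▸ Finset.single_le_sum (fun l' _ => hs l' i) (Finset.mem_univ l)
  -- the log-sum inequality over `i`, for each output pair `(l, n)`
  have hterm : ∀ l n, (∑ i, s l i * q i n) * Real.log ((∑ i, s l i * q i n) /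
      ((∑ n', ∑ i, s l i * q i n') * ∑ l', ∑ i, s l' i * q i n)) ≤ ∑ i, q i n * f l i := by
    intro l n
    have hsum : (∑ n', ∑ i, s l i * q i n') * ∑ l', ∑ i, s l' i * q i n
        = ∑ i, (∑ i', s l i') * (∑ l', s l' i) * q i n := by
      rw [hrow, hcol, Finset.mul_sum]
      simp only [mul_assoc]
    rw [hsum]
    refine (Real.sum_mul_log_div_sum_le _ _ (fun i => mul_nonneg (hs l i) (hq i n))
      (fun i => mul_nonneg (hmarg_nonneg l i) (hq i n)) fun i h => ?_).trans_eq
      (Finset.sum_congr rfl fun i _ => ?_)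
    · rcases mul_eq_zero.mp h with h | h
      · rw [hmarg_eq_zero l i h, zero_mul]
      · rw [h, mul_zero]
    · by_cases hqn : q i n = 0
      · simp [hqn]
      · rw [mul_div_mul_right _ _ hqn]
        ring
  rw [mutualInfo_eq_sum, mutualInfo_eq_sum]
  calc _ ≤ ∑ l, ∑ n, ∑ i, q i n * f l i :=
        Finset.sum_le_sum fun l _ => Finset.sum_le_sum fun n _ => hterm l n
    _ = ∑ l, ∑ i, f l i := by
        simp only [Finset.sum_comm (γ := N), ← Finset.sum_mul, hq1, one_mul]

open scoped ComplexOrder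

lemma cinner_eq_star_dotProduct {m : ℕ} (u v : Fin m → ℂ) : cinner u v = star u ⬝ᵥ v := rfl

lemma projVec_eq_vecMulVec {m : ℕ} (v : Fin m → ℂ) : projVec v = vecMulVec v (star v) := rfl

lemma cinner_projVec_mulVec {m : ℕ} (u v w : Fin m → ℂ) :
    cinner u (projVec v *ᵥ w) = cinner u v * cinner v w := by
  simp only [cinner_eq_star_dotProduct, projVec_eq_vecMulVec, vecMulVec_mulVec, op_smul_eq_smul,
    dotProduct_smul, smul_eq_mul, mul_comm]

lemma trace_mul_projVec {m : ℕ} (Y : Matrix (Fin m) (Fin m) ℂ) (v : Fin m → ℂ) :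
    (Y * projVec v).trace = cinner v (Y *ᵥ v) := by
  rw [projVec_eq_vecMulVec, mul_vecMulVec, trace_vecMulVec, dotProduct_comm]
  rfl

lemma trace_kronecker_mul_sigmaSF {d m : ℕ} (p : Fin d → ℝ) (Ψ : Fin d → Fin m → ℂ)
    (A : Matrix (Fin d) (Fin d) ℂ) (Y : Matrix (Fin m) (Fin m) ℂ) :
    ((A ⊗ₖ Y) * sigmaSF p Ψ).trace = ∑ i, (p i : ℂ) * (A i i * cinner (Ψ i) (Y *ᵥ Ψ i)) := by
  rw [sigmaSF, Finset.mul_sum, trace_sum]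
  refine Finset.sum_congr rfl fun i _ => ?_
  rw [Matrix.mul_smul, trace_smul, ← mul_kronecker_mul, trace_kronecker, matE, trace_mul_single,
    trace_mul_projVec, smul_eq_mul, MulOpposite.op_one, one_smul]

lemma re_trace_kronecker_mul_sigmaSF {d m : ℕ} (p : Fin d → ℝ) (Ψ : Fin d → Fin m → ℂ)
    {A : Matrix (Fin d) (Fin d) ℂ} (hA : A.IsHermitian) (Y : Matrix (Fin m) (Fin m) ℂ) :
    (((A ⊗ₖ Y) * sigmaSF p Ψ).trace).re
      = ∑ i, p i * (A i i).re * (cinner (Ψ i) (Y *ᵥ Ψ i)).re := by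
  rw [trace_kronecker_mul_sigmaSF, Complex.re_sum]
  refine Finset.sum_congr rfl fun i _ => ?_
  obtain ⟨r, hr⟩ : ∃ r : ℝ, A i i = r := ⟨_, (hA.coe_re_apply_self i).symm⟩
  rw [hr, ← mul_assoc, ← Complex.ofReal_mul, Complex.re_ofReal_mul, Complex.ofReal_re]

namespace IsProjMeasurement

variable {ι n : Type*} [Fintype ι] [DecidableEq ι] [Fintype n] [DecidableEq n]
  {P : ι → Matrix n n ℂ}

lemma posSemidef (hP : IsProjMeasurement P) (k : ι) : (P k).PosSemidef := by
  have h : (P k)ᴴ * P k = P k := by rw [(hP.1 k).eq, hP.2.1 k k, if_pos rfl]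
  exact h ▸ posSemidef_conjTranspose_mul_self (P k)

lemma re_diag_nonneg (hP : IsProjMeasurement P) (k : ι) (i : n) : 0 ≤ (P k i i).re :=
  (Complex.nonneg_iff.mp (hP.posSemidef k).diag_nonneg).1

lemma re_cinner_mulVec_nonneg {m : ℕ} {Y : ι → Matrix (Fin m) (Fin m) ℂ}
    (hY : IsProjMeasurement Y) (k : ι) (v : Fin m → ℂ) : 0 ≤ (cinner v (Y k *ᵥ v)).re :=
  (Complex.nonneg_iff.mp ((hY.posSemidef k).dotProduct_mulVec_nonneg v)).1

lemma sum_cinner_mulVec {m : ℕ} {Y : ι → Matrix (Fin m) (Fin m) ℂ}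
    (hY : IsProjMeasurement Y) (v : Fin m → ℂ) : ∑ k, cinner v (Y k *ᵥ v) = cinner v v := by
  simp only [cinner_eq_star_dotProduct, ← dotProduct_sum, ← sum_mulVec, hY.2.2, one_mulVec]

end IsProjMeasurement

theorem stmt_17_general {d m : ℕ} {L : Type*} [Fintype L] [DecidableEq L]
    (p : Fin d → ℝ) (hp0 : ∀ i, 0 ≤ p i)
    (Ψ : Fin d → Fin m → ℂ)
    (hΨ : ∀ i j, cinner (Ψ i) (Ψ j) = if i = j then 1 else 0)
    (B : L → Matrix (Fin d) (Fin d) ℂ) (hB : IsProjMeasurement B)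
    (pBA : L → Fin d → ℝ)
    (hBA : ∀ l i, pBA l i = p i * ((B l) i i).re) :
    (∀ (N : Type) (_ : Fintype N) (_ : DecidableEq N)
        (Y : N → Matrix (Fin m) (Fin m) ℂ), IsProjMeasurement Y →
      mutualInfo (fun l n => (((B l ⊗ₖ Y n) * sigmaSF p Ψ).trace).re) ≤ mutualInfo pBA) ∧
    (fun l i => (((B l ⊗ₖ projVec (Ψ i)) * sigmaSF p Ψ).trace).re) = pBA ∧
    mutualInfo (fun l i => (((B l ⊗ₖ projVec (Ψ i)) * sigmaSF p Ψ).trace).re)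
      = mutualInfo pBA := by
  have hpointer : ∀ i j, (cinner (Ψ j) (projVec (Ψ i) *ᵥ Ψ j)).re = if j = i then 1 else 0 := by
    intro i j
    rw [cinner_projVec_mulVec, hΨ, hΨ]
    by_cases h : j = i <;> simp [h]
  have hBX : (fun l i => (((B l ⊗ₖ projVec (Ψ i)) * sigmaSF p Ψ).trace).re) = pBA := by
    funext l i
    simp only [re_trace_kronecker_mul_sigmaSF p Ψ (hB.1 l), hpointer, mul_ite, mul_one, mul_zero,
      Finset.sum_ite_eq', Finset.mem_univ, if_true, hBA]
  refine ⟨fun N _ _ Y hY => ?_, hBX, by rw [hBX]⟩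
  have hBY : (fun l n => (((B l ⊗ₖ Y n) * sigmaSF p Ψ).trace).re)
      = fun l n => ∑ i, pBA l i * (cinner (Ψ i) (Y n *ᵥ Ψ i)).re := by
    funext l n
    simp only [re_trace_kronecker_mul_sigmaSF p Ψ (hB.1 l), hBA]
  rw [hBY]
  refine mutualInfo_sum_mul_le _ _ (fun l i => ?_) (fun i n => hY.re_cinner_mulVec_nonneg n _)
    fun i => ?_
  · rw [hBA]
    exact mul_nonneg (hp0 i) (hB.re_diag_nonneg l i)
  · rw [← Complex.re_sum, hY.sum_cinner_mulVec, hΨ, if_pos rfl, Complex.one_re]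

/-- Eq. (36), `Î_F(B) = I(B:A)`: (a) every fragment measurement `Y` satisfies
`I(B:Y) ≤ I(B:A)`, where `p_{BA}(l,i) = pᵢ Re((B_l)ᵢᵢ)` is the system-side joint
distribution of `A` followed by `B`; and (b) the pointer measurement `X` achieves the
bound: `p_{BX} = p_{BA}`, hence `I(B:X) = I(B:A)`. -/
theorem stmt_17 {d m : ℕ} {L : Type*} [Fintype L] [DecidableEq L]
    (p : Fin d → ℝ) (hp0 : ∀ i, 0 ≤ p i) (hp1 : ∑ i, p i = 1)
    (Ψ : Fin d → Fin m → ℂ)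
    (hΨ : ∀ i j, cinner (Ψ i) (Ψ j) = if i = j then 1 else 0)
    (B : L → Matrix (Fin d) (Fin d) ℂ) (hB : IsProjMeasurement B)
    (pBA : L → Fin d → ℝ)
    (hBA : ∀ l i, pBA l i = p i * ((B l) i i).re) :
    (∀ (N : Type) (_ : Fintype N) (_ : DecidableEq N)
        (Y : N → Matrix (Fin m) (Fin m) ℂ), IsProjMeasurement Y →
      mutualInfo (fun l n => (((B l ⊗ₖ Y n) * sigmaSF p Ψ).trace).re) ≤ mutualInfo pBA) ∧
    (fun l i => (((B l ⊗ₖ projVec (Ψ i)) * sigmaSF p Ψ).trace).re) = pBA ∧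
    mutualInfo (fun l i => (((B l ⊗ₖ projVec (Ψ i)) * sigmaSF p Ψ).trace).re)
      = mutualInfo pBA :=
  stmt_17_general p hp0 Ψ hΨ B hB pBA hBA
end
end
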